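/- arXiv:2205.10499 — 3 statements merged into one kernel-verified Lean document; each statement's English description precedes it below -/
import Mathlib

section
/- Under the zero-laxity condition r_max·Δ_T·Σ_{j=1}^T E_{i,j} = e_i for every i, the optimal values of problem (P1) and of the relaxed problem (P2) with M = I_T and W = r_max·E coincide: p₁* = p₂*, and both minima are attained. -/
open Matrix Complex

/-- The complex unit `e^{iθπ/180}` at angle `θ` degrees. -/
noncomputable def ang (θ : ℝ) : ℂ := Complex.exp ((θ * Real.pi / 180) * Complex.I)

/-- The matrix `Φ₁` transforming delta phase powers to primary-side line powers. -/
noncomputable def Phi1 : Matrix (Fin 3) (Fin 3) ℂ :=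
  !![ang 30, 0, -ang 150;
     -ang 30, ang (-90), 0;
     0, -ang (-90), ang 150]

/-- The matrix `Φ₂` (with turning ratio `n_r`) transforming delta phase powers to
secondary-side line powers. -/
noncomputable def Phi2 (n_r : ℝ) : Matrix (Fin 3) (Fin 3) ℂ :=
  ((n_r : ℂ))⁻¹ • !![ang 30, ang (-90), -2 * ang 150;
     -2 * ang 30, ang (-90), ang 150;
     ang 30, -2 * ang (-90), ang 150]

/-- `X ∈ 𝒳`: a binary `3 × N` matrix each of whose columns sums to `1`. -/
def memX {N : ℕ} (X : Matrix (Fin 3) (Fin N) ℝ) : Prop :=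
  (∀ m i, X m i = 0 ∨ X m i = 1) ∧ ∀ i, (∑ m, X m i) = 1

/-- `A ∈ C_r`: the charger (maximum-rate) constraint. -/
def memCr {N T : ℕ} (r_max : ℝ) (E : Matrix (Fin N) (Fin T) ℝ)
    (A : Matrix (Fin N) (Fin T) ℝ) : Prop :=
  ∀ i j, 0 ≤ A i j ∧ A i j ≤ r_max * E i j

/-- `A ∈ C_d`: the energy-demand constraint. -/
def memCd {N T : ℕ} (Δ : ℝ) (e : Fin N → ℝ) (A : Matrix (Fin N) (Fin T) ℝ) : Prop :=
  ∀ i, Δ * (∑ j, A i j) ≤ e i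

/-- `(X, A) ∈ C_soc`: the network (transformer capacity) constraint. -/
def memCsoc {N T : ℕ} (n_r : ℝ) (Cmax : Matrix (Fin 6) (Fin T) ℝ)
    (X : Matrix (Fin 3) (Fin N) ℝ) (A : Matrix (Fin N) (Fin T) ℝ) : Prop :=
  ∀ (i : Fin 3) (j : Fin T),
    ‖(Phi1 * (X * A).map ((↑) : ℝ → ℂ)) i j‖ ≤ Cmax (Fin.castAdd 3 i) j ∧
    ‖(Phi2 n_r * (X * A).map ((↑) : ℝ → ℂ)) i j‖ ≤ Cmax (Fin.addNat i 3) j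

/-- The feasible set `S` of problem (P1). -/
def feasibleP1 {N T : ℕ} (r_max Δ n_r : ℝ) (E : Matrix (Fin N) (Fin T) ℝ)
    (e : Fin N → ℝ) (Cmax : Matrix (Fin 6) (Fin T) ℝ)
    (X : Matrix (Fin 3) (Fin N) ℝ) (A : Matrix (Fin N) (Fin T) ℝ) : Prop :=
  memX X ∧ memCr r_max E A ∧ memCd Δ e A ∧ memCsoc n_r Cmax X A

/-- The objective `f(A) = -∑_{i,j} A_{i,j}` of problem (P1). -/
def objF {N T : ℕ} (A : Matrix (Fin N) (Fin T) ℝ) : ℝ := -∑ i, ∑ j, A i j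

/-- Feasibility in the relaxed problem (P2) with `M = I_T` and `W = r_max · E`. -/
def feasibleP2 {N T : ℕ} (r_max n_r : ℝ) (E : Matrix (Fin N) (Fin T) ℝ)
    (Cmax : Matrix (Fin 6) (Fin T) ℝ)
    (X : Matrix (Fin 3) (Fin N) ℝ) (P : Matrix (Fin 3) (Fin T) ℝ) : Prop :=
  memX X ∧ (∀ m j, 0 ≤ P m j) ∧ (∀ m j, P m j ≤ r_max * (X * E) m j) ∧
  ∀ (i : Fin 3) (j : Fin T),
    ‖(Phi1 * P.map ((↑) : ℝ → ℂ)) i j‖ ≤ Cmax (Fin.castAdd 3 i) j ∧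
    ‖(Phi2 n_r * P.map ((↑) : ℝ → ℂ)) i j‖ ≤ Cmax (Fin.addNat i 3) j

/-- The objective `g(P) = -∑_{m,j} P_{m,j}` of the relaxed problem (P2). -/
def objG {T : ℕ} (P : Matrix (Fin 3) (Fin T) ℝ) : ℝ := -∑ m, ∑ j, P m j

/-!
Every `X ∈ 𝒳` is the 0/1 matrix of a map `σ` sending each EV to its phase. Then `(X, A) ↦ (X, X * A)`
maps the feasible set of (P1) into that of (P2) and preserves the objective, since `X * A` just
adds up the rows of `A` phase by phase. Conversely, a feasible `P` of (P2) is split back over the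
EVs of each phase in proportion to their availability `E`; this gives `A ∈ C_r` with `X * A = P`,
and under zero laxity `C_r ⊆ C_d`, so `A` is feasible for (P1). Hence both problems have the same
set of objective values. The feasible set of (P1) is compact (`X` binary, `A` in a box) and contains
`(X, 0)`, so that set of values has a least element.
-/

section AssignmentMatrix

variable {ι κ τ : Type*} [DecidableEq ι]

def assignmentMatrix (R : Type*) [Zero R] [One R] (σ : κ → ι) : Matrix ι κ R :=
  Matrix.of fun m i => if σ i = m then 1 else 0

variable [Fintype κ] {R : Type*} [NonAssocSemiring R]

lemma assignmentMatrix_mul_apply (σ : κ → ι) (A : Matrix κ τ R) (m : ι) (j : τ) :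
    (assignmentMatrix R σ * A) m j = ∑ i with σ i = m, A i j := by
  simp only [assignmentMatrix, Matrix.mul_apply, Matrix.of_apply, ite_mul, one_mul, zero_mul,
    Finset.sum_filter]

lemma sum_assignmentMatrix_mul_apply [Fintype ι] (σ : κ → ι) (A : Matrix κ τ R) (j : τ) :
    ∑ m, (assignmentMatrix R σ * A) m j = ∑ i, A i j := by
  simp only [assignmentMatrix_mul_apply]
  exact Finset.sum_fiberwise _ σ _

lemma sum_sum_assignmentMatrix_mul [Fintype ι] [Fintype τ] (σ : κ → ι) (A : Matrix κ τ R) :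
    ∑ m, ∑ j, (assignmentMatrix R σ * A) m j = ∑ i, ∑ j, A i j := by
  exact Finset.sum_comm.trans
    ((Fintype.sum_congr _ _ (sum_assignmentMatrix_mul_apply σ A)).trans Finset.sum_comm)

end AssignmentMatrix

lemma mul_div_cancel_of_nonneg_of_le_mul {K : Type*} [Field K] [LinearOrder K]
    [IsStrictOrderedRing K] {p w r : K} (hp : 0 ≤ p) (hpw : p ≤ r * w) : w * (p / w) = p := by
  rcases eq_or_ne w 0 with rfl | hw
  · rw [mul_zero] at hpw
    simp [le_antisymm hpw hp]
  · exact mul_div_cancel₀ p hw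

section Feasibility

variable {N T : ℕ} {r_max Δ n_r : ℝ} {E : Matrix (Fin N) (Fin T) ℝ} {e : Fin N → ℝ}
  {Cmax : Matrix (Fin 6) (Fin T) ℝ}

lemma memX_assignmentMatrix (σ : Fin N → Fin 3) : memX (assignmentMatrix ℝ σ) := by
  refine ⟨fun m i => ?_, fun i => ?_⟩
  · simp only [assignmentMatrix, Matrix.of_apply]
    split_ifs <;> simp
  · simp [assignmentMatrix]

lemma memX.exists_eq_assignmentMatrix {X : Matrix (Fin 3) (Fin N) ℝ} (hX : memX X) :
    ∃ σ : Fin N → Fin 3, X = assignmentMatrix ℝ σ := by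
  have hcol : ∀ i, ∃ m, ∀ m', X m' i = if m = m' then 1 else 0 := by
    intro i
    have hs := hX.2 i
    rw [Fin.sum_univ_three] at hs
    rcases hX.1 0 i with h0 | h0 <;> rcases hX.1 1 i with h1 | h1 <;>
      rcases hX.1 2 i with h2 | h2 <;> simp_all [Fin.exists_fin_succ, Fin.forall_fin_succ]
  choose σ hσ using hcol
  exact ⟨σ, Matrix.ext fun m i => hσ i m⟩

lemma objG_mul {X : Matrix (Fin 3) (Fin N) ℝ} (hX : memX X) (A : Matrix (Fin N) (Fin T) ℝ) :
    objG (X * A) = objF A := by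
  obtain ⟨σ, rfl⟩ := hX.exists_eq_assignmentMatrix
  simp only [objG, objF, sum_sum_assignmentMatrix_mul]

lemma feasibleP2_mul {X : Matrix (Fin 3) (Fin N) ℝ} {A : Matrix (Fin N) (Fin T) ℝ}
    (h : feasibleP1 r_max Δ n_r E e Cmax X A) : feasibleP2 r_max n_r E Cmax X (X * A) := by
  obtain ⟨hX, hA, -, hsoc⟩ := h
  refine ⟨hX, fun m j => ?_, fun m j => ?_, hsoc⟩
  all_goals
    obtain ⟨σ, rfl⟩ := hX.exists_eq_assignmentMatrix
    rw [assignmentMatrix_mul_apply]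
  · exact Finset.sum_nonneg fun i _ => (hA i j).1
  · rw [assignmentMatrix_mul_apply, Finset.mul_sum]
    exact Finset.sum_le_sum fun i _ => (hA i j).2

lemma memCd_of_memCr (hΔ : 0 ≤ Δ) (hzl : ∀ i, r_max * Δ * (∑ j, E i j) = e i)
    {A : Matrix (Fin N) (Fin T) ℝ} (hA : memCr r_max E A) : memCd Δ e A := fun i =>
  calc Δ * ∑ j, A i j ≤ Δ * ∑ j, r_max * E i j :=
        mul_le_mul_of_nonneg_left (Finset.sum_le_sum fun j _ => (hA i j).2) hΔ
    _ = e i := by rw [← hzl i, ← Finset.mul_sum]; ring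

/-- Each EV `i` receives the share `E i j / W (σ i) j` of its phase's power `P (σ i) j`, where
`W = assignmentMatrix ℝ σ * E`. Where `W (σ i) j = 0` the division gives `0`, and so does `P`. -/
noncomputable def disaggregate (σ : Fin N → Fin 3) (E : Matrix (Fin N) (Fin T) ℝ)
    (P : Matrix (Fin 3) (Fin T) ℝ) : Matrix (Fin N) (Fin T) ℝ :=
  Matrix.of fun i j => E i j * (P (σ i) j / (assignmentMatrix ℝ σ * E) (σ i) j)

section Disaggregate

variable {σ : Fin N → Fin 3} {P : Matrix (Fin 3) (Fin T) ℝ}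

lemma assignmentMatrix_mul_disaggregate (hP0 : ∀ m j, 0 ≤ P m j)
    (hPE : ∀ m j, P m j ≤ r_max * (assignmentMatrix ℝ σ * E) m j) :
    assignmentMatrix ℝ σ * disaggregate σ E P = P := by
  ext m j
  calc (assignmentMatrix ℝ σ * disaggregate σ E P) m j
      = (∑ i with σ i = m, E i j) * (P m j / (assignmentMatrix ℝ σ * E) m j) := by
        rw [assignmentMatrix_mul_apply, Finset.sum_mul]
        refine Finset.sum_congr rfl fun i hi => ?_
        obtain rfl := (Finset.mem_filter.1 hi).2
        rfl
    _ = P m j := by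
        rw [← assignmentMatrix_mul_apply]
        exact mul_div_cancel_of_nonneg_of_le_mul (hP0 m j) (hPE m j)

lemma memCr_disaggregate (hr : 0 ≤ r_max) (hE : ∀ i j, 0 ≤ E i j) (hP0 : ∀ m j, 0 ≤ P m j)
    (hPE : ∀ m j, P m j ≤ r_max * (assignmentMatrix ℝ σ * E) m j) :
    memCr r_max E (disaggregate σ E P) := by
  intro i j
  have hW : 0 ≤ (assignmentMatrix ℝ σ * E) (σ i) j := by
    rw [assignmentMatrix_mul_apply]
    exact Finset.sum_nonneg fun i _ => hE i j
  have hshare : P (σ i) j / (assignmentMatrix ℝ σ * E) (σ i) j ≤ r_max :=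
    div_le_of_le_mul₀ hW hr (hPE _ _)
  refine ⟨mul_nonneg (hE i j) (div_nonneg (hP0 _ _) hW), ?_⟩
  rw [mul_comm r_max]
  exact mul_le_mul_of_nonneg_left hshare (hE i j)

end Disaggregate

lemma exists_feasibleP1_mul_eq (hr : 0 ≤ r_max) (hΔ : 0 ≤ Δ) (hE : ∀ i j, 0 ≤ E i j)
    (hzl : ∀ i, r_max * Δ * (∑ j, E i j) = e i) {X : Matrix (Fin 3) (Fin N) ℝ}
    {P : Matrix (Fin 3) (Fin T) ℝ} (h : feasibleP2 r_max n_r E Cmax X P) :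
    ∃ A, feasibleP1 r_max Δ n_r E e Cmax X A ∧ X * A = P := by
  obtain ⟨hX, hP0, hPE, hsoc⟩ := h
  obtain ⟨σ, rfl⟩ := hX.exists_eq_assignmentMatrix
  have hA := memCr_disaggregate hr hE hP0 hPE
  have hXA := assignmentMatrix_mul_disaggregate hP0 hPE
  exact ⟨disaggregate σ E P, ⟨hX, hA, memCd_of_memCr hΔ hzl hA, by rwa [memCsoc, hXA]⟩, hXA⟩

variable (r_max Δ n_r E e Cmax)

def valuesP1 : Set ℝ :=
  {v | ∃ (X : Matrix (Fin 3) (Fin N) ℝ) (A : Matrix (Fin N) (Fin T) ℝ),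
    feasibleP1 r_max Δ n_r E e Cmax X A ∧ v = objF A}

def valuesP2 : Set ℝ :=
  {v | ∃ (X : Matrix (Fin 3) (Fin N) ℝ) (P : Matrix (Fin 3) (Fin T) ℝ),
    feasibleP2 r_max n_r E Cmax X P ∧ v = objG P}

lemma isClosed_setOf_feasibleP1 :
    IsClosed {p : Matrix (Fin 3) (Fin N) ℝ × Matrix (Fin N) (Fin T) ℝ |
      feasibleP1 r_max Δ n_r E e Cmax p.1 p.2} := by
  simp only [feasibleP1, memX, memCr, memCd, memCsoc, Set.ofPred_and, Set.ofPred_forall,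
    Set.ofPred_or]
  refine .inter (.inter ?_ ?_) (.inter ?_ (.inter ?_ ?_))
  · exact isClosed_iInter fun m => isClosed_iInter fun i =>
      (isClosed_eq (by fun_prop) (by fun_prop)).union (isClosed_eq (by fun_prop) (by fun_prop))
  · exact isClosed_iInter fun i => isClosed_eq (by fun_prop) (by fun_prop)
  · exact isClosed_iInter fun i => isClosed_iInter fun j =>
      (isClosed_le (by fun_prop) (by fun_prop)).inter (isClosed_le (by fun_prop) (by fun_prop))
  · exact isClosed_iInter fun i => isClosed_le (by fun_prop) (by fun_prop)
  · exact isClosed_iInter fun i => isClosed_iInter fun j =>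
      (isClosed_le (by fun_prop) (by fun_prop)).inter (isClosed_le (by fun_prop) (by fun_prop))

lemma isCompact_setOf_feasibleP1 :
    IsCompact {p : Matrix (Fin 3) (Fin N) ℝ × Matrix (Fin N) (Fin T) ℝ |
      feasibleP1 r_max Δ n_r E e Cmax p.1 p.2} := by
  have hbox : IsCompact
      ((Set.univ.pi fun _ : Fin 3 => Set.univ.pi fun _ : Fin N => ({0, 1} : Set ℝ)) ×ˢ
        (Set.univ.pi fun i => Set.univ.pi fun j => Set.Icc 0 (r_max * E i j))) :=
    (isCompact_univ_pi fun _ => isCompact_univ_pi fun _ => (Set.toFinite _).isCompact).prod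
      (isCompact_univ_pi fun _ => isCompact_univ_pi fun _ => isCompact_Icc)
  exact hbox.of_isClosed_subset (isClosed_setOf_feasibleP1 r_max Δ n_r E e Cmax)
    fun p hp => ⟨fun m _ i _ => hp.1.1 m i, fun i _ j _ => hp.2.1 i j⟩

variable {r_max Δ n_r E e Cmax}

lemma valuesP1_eq_valuesP2 (hr : 0 ≤ r_max) (hΔ : 0 ≤ Δ) (hE : ∀ i j, 0 ≤ E i j)
    (hzl : ∀ i, r_max * Δ * (∑ j, E i j) = e i) :
    valuesP1 r_max Δ n_r E e Cmax = valuesP2 r_max n_r E Cmax := by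
  ext v
  constructor
  · rintro ⟨X, A, h, rfl⟩
    exact ⟨X, X * A, feasibleP2_mul h, (objG_mul h.1 A).symm⟩
  · rintro ⟨X, P, h, rfl⟩
    obtain ⟨A, hA, rfl⟩ := exists_feasibleP1_mul_eq hr hΔ hE hzl h
    exact ⟨X, A, hA, objG_mul hA.1 A⟩

lemma feasibleP1_zero (hr : 0 ≤ r_max) (hE : ∀ i j, 0 ≤ E i j) (he : ∀ i, 0 ≤ e i)
    (hC : ∀ i j, 0 ≤ Cmax i j) {X : Matrix (Fin 3) (Fin N) ℝ} (hX : memX X) :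
    feasibleP1 r_max Δ n_r E e Cmax X 0 :=
  ⟨hX, fun i j => ⟨le_rfl, mul_nonneg hr (hE i j)⟩, fun i => by simpa using he i,
    fun i j => by simp [hC]⟩

lemma exists_isLeast_valuesP1 (hr : 0 ≤ r_max) (hE : ∀ i j, 0 ≤ E i j) (he : ∀ i, 0 ≤ e i)
    (hC : ∀ i j, 0 ≤ Cmax i j) : ∃ v, IsLeast (valuesP1 r_max Δ n_r E e Cmax) v := by
  have himage : valuesP1 r_max Δ n_r E e Cmax =
      (fun p : Matrix (Fin 3) (Fin N) ℝ × Matrix (Fin N) (Fin T) ℝ => objF p.2) ''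
        {p | feasibleP1 r_max Δ n_r E e Cmax p.1 p.2} := by
    ext v
    simp [valuesP1, eq_comm]
  rw [himage]
  refine ((isCompact_setOf_feasibleP1 r_max Δ n_r E e Cmax).image ?_).exists_isLeast
    (Set.Nonempty.image _ ⟨(_, 0), feasibleP1_zero hr hE he hC (memX_assignmentMatrix 0)⟩)
  unfold objF
  fun_prop

end Feasibility
theorem stmt9_general (N T : ℕ)
    (r_max Δ n_r : ℝ) (hr : 0 < r_max) (hΔ : 0 < Δ)
    (E : Matrix (Fin N) (Fin T) ℝ) (hE : ∀ i j, E i j = 0 ∨ E i j = 1)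
    (e : Fin N → ℝ) (he : ∀ i, 0 ≤ e i)
    (Cmax : Matrix (Fin 6) (Fin T) ℝ) (hC : ∀ i j, 0 ≤ Cmax i j)
    (hzl : ∀ i, r_max * Δ * (∑ j, E i j) = e i) :
    (∃ (X : Matrix (Fin 3) (Fin N) ℝ) (A : Matrix (Fin N) (Fin T) ℝ),
      feasibleP1 r_max Δ n_r E e Cmax X A ∧
      objF A = sInf {v : ℝ | ∃ (X' : Matrix (Fin 3) (Fin N) ℝ)
          (A' : Matrix (Fin N) (Fin T) ℝ),
        feasibleP1 r_max Δ n_r E e Cmax X' A' ∧ v = objF A'}) ∧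
    (∃ (X : Matrix (Fin 3) (Fin N) ℝ) (P : Matrix (Fin 3) (Fin T) ℝ),
      feasibleP2 r_max n_r E Cmax X P ∧
      objG P = sInf {v : ℝ | ∃ (X' : Matrix (Fin 3) (Fin N) ℝ)
          (P' : Matrix (Fin 3) (Fin T) ℝ),
        feasibleP2 r_max n_r E Cmax X' P' ∧ v = objG P'}) ∧
    sInf {v : ℝ | ∃ (X' : Matrix (Fin 3) (Fin N) ℝ) (A' : Matrix (Fin N) (Fin T) ℝ),
        feasibleP1 r_max Δ n_r E e Cmax X' A' ∧ v = objF A'}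
      = sInf {v : ℝ | ∃ (X' : Matrix (Fin 3) (Fin N) ℝ)
          (P' : Matrix (Fin 3) (Fin T) ℝ),
        feasibleP2 r_max n_r E Cmax X' P' ∧ v = objG P'} := by
  have hE0 : ∀ i j, 0 ≤ E i j := fun i j => by rcases hE i j with h | h <;> simp [h]
  have hvalues := valuesP1_eq_valuesP2 (n_r := n_r) (Cmax := Cmax) hr.le hΔ.le hE0 hzl
  obtain ⟨v, hv1⟩ := exists_isLeast_valuesP1 (Δ := Δ) (n_r := n_r) hr.le hE0 he hC
  have hv2 := hvalues ▸ hv1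
  obtain ⟨X, A, hA, rfl⟩ := hv1.1
  obtain ⟨Y, P, hP, hPv⟩ := hv2.1
  exact ⟨⟨X, A, hA, hv1.csInf_eq.symm⟩, ⟨Y, P, hP, hPv ▸ hv2.csInf_eq.symm⟩,
    congrArg sInf hvalues⟩

/-- Under zero laxity, the optimal values of (P1) and of the relaxed
problem (P2) with `M = I_T`, `W = r_max·E` coincide, and both minima are attained. -/
theorem stmt9 (N T : ℕ) (hN : 0 < N) (hT : 0 < T)
    (r_max Δ n_r : ℝ) (hr : 0 < r_max) (hΔ : 0 < Δ) (hn : 0 < n_r)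
    (E : Matrix (Fin N) (Fin T) ℝ) (hE : ∀ i j, E i j = 0 ∨ E i j = 1)
    (e : Fin N → ℝ) (he : ∀ i, 0 ≤ e i)
    (Cmax : Matrix (Fin 6) (Fin T) ℝ) (hC : ∀ i j, 0 ≤ Cmax i j)
    (hzl : ∀ i, r_max * Δ * (∑ j, E i j) = e i) :
    (∃ (X : Matrix (Fin 3) (Fin N) ℝ) (A : Matrix (Fin N) (Fin T) ℝ),
      feasibleP1 r_max Δ n_r E e Cmax X A ∧
      objF A = sInf {v : ℝ | ∃ (X' : Matrix (Fin 3) (Fin N) ℝ)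
          (A' : Matrix (Fin N) (Fin T) ℝ),
        feasibleP1 r_max Δ n_r E e Cmax X' A' ∧ v = objF A'}) ∧
    (∃ (X : Matrix (Fin 3) (Fin N) ℝ) (P : Matrix (Fin 3) (Fin T) ℝ),
      feasibleP2 r_max n_r E Cmax X P ∧
      objG P = sInf {v : ℝ | ∃ (X' : Matrix (Fin 3) (Fin N) ℝ)
          (P' : Matrix (Fin 3) (Fin T) ℝ),
        feasibleP2 r_max n_r E Cmax X' P' ∧ v = objG P'}) ∧
    sInf {v : ℝ | ∃ (X' : Matrix (Fin 3) (Fin N) ℝ) (A' : Matrix (Fin N) (Fin T) ℝ),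
        feasibleP1 r_max Δ n_r E e Cmax X' A' ∧ v = objF A'}
      = sInf {v : ℝ | ∃ (X' : Matrix (Fin 3) (Fin N) ℝ)
          (P' : Matrix (Fin 3) (Fin T) ℝ),
        feasibleP2 r_max n_r E Cmax X' P' ∧ v = objG P'} :=
  stmt9_general N T r_max Δ n_r hr hΔ E hE e he Cmax hC hzl
end

section
/- Let X ∈ 𝒳 and A ∈ C_r ∩ C_d. Then for every phase index m ∈ {1,2,3} and every nonempty subset S ⊆ {1,…,T} of time steps, the aggregated power satisfies Σ_{j∈S} (XA)_{m,j} ≤ Σ_{i=1}^N X_{m,i} · min( r_max·Σ_{j∈S} E_{i,j} , e_i/Δ_T ). (Thus every feasible pair of problem (P1) satisfies all of the subset-selection constraints P·M_𝒯 ≤ X·W₃ of the set 𝒫₃ with P = XA.) -/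
/-!
Exchanging the order of summation, `∑_{j∈S} (XA)_{m,j} = ∑_i X_{m,i} ∑_{j∈S} A_{i,j}`, and `X ≥ 0`,
so it suffices to bound every partial row sum `∑_{j∈S} A_{i,j}` by both terms of the minimum:
by `r_max ∑_{j∈S} E_{i,j}` entrywise from `C_r`, and by `e_i/Δ_T` because, `A` being nonnegative,
the partial row sum is at most the full one, which `C_d` controls.
-/

open Matrix Complex

theorem Matrix.sum_mul_apply_eq_sum_mul_sum {ι κ α R : Type*} [Fintype κ] [CommSemiring R]
    (X : Matrix ι κ R) (A : Matrix κ α R) (m : ι) (S : Finset α) :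
    ∑ j ∈ S, (X * A) m j = ∑ i, X m i * ∑ j ∈ S, A i j := by
  simp only [Matrix.mul_apply, Finset.mul_sum]
  exact Finset.sum_comm

theorem memX.nonneg {N : ℕ} {X : Matrix (Fin 3) (Fin N) ℝ} (hX : memX X) (m : Fin 3) (i : Fin N) :
    0 ≤ X m i := by
  rcases hX.1 m i with h | h <;> simp [h]

theorem memCr.sum_le {N T : ℕ} {r_max : ℝ} {E A : Matrix (Fin N) (Fin T) ℝ}
    (hA : memCr r_max E A) (i : Fin N) (S : Finset (Fin T)) :
    ∑ j ∈ S, A i j ≤ r_max * ∑ j ∈ S, E i j := by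
  rw [Finset.mul_sum]
  exact Finset.sum_le_sum fun j _ => (hA i j).2

theorem memCd.sum_le_of_memCr {N T : ℕ} {r_max Δ : ℝ} {E A : Matrix (Fin N) (Fin T) ℝ}
    {e : Fin N → ℝ} (hΔ : 0 < Δ) (hAd : memCd Δ e A) (hAr : memCr r_max E A) (i : Fin N)
    (S : Finset (Fin T)) : ∑ j ∈ S, A i j ≤ e i / Δ :=
  calc ∑ j ∈ S, A i j ≤ ∑ j, A i j :=
        Finset.sum_le_sum_of_subset_of_nonneg S.subset_univ fun j _ _ => (hAr i j).1
    _ ≤ e i / Δ := by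
        rw [le_div_iff₀ hΔ, mul_comm]
        exact hAd i

theorem stmt10_general (N T : ℕ)
    (r_max Δ : ℝ) (hΔ : 0 < Δ)
    (E : Matrix (Fin N) (Fin T) ℝ)
    (e : Fin N → ℝ)
    (X : Matrix (Fin 3) (Fin N) ℝ) (hX : memX X)
    (A : Matrix (Fin N) (Fin T) ℝ) (hAr : memCr r_max E A) (hAd : memCd Δ e A) :
    ∀ (m : Fin 3) (S : Finset (Fin T)), S.Nonempty →
      (∑ j ∈ S, (X * A) m j)
        ≤ ∑ i, X m i * min (r_max * ∑ j ∈ S, E i j) (e i / Δ) := by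
  intro m S _
  rw [Matrix.sum_mul_apply_eq_sum_mul_sum]
  refine Finset.sum_le_sum fun i _ => mul_le_mul_of_nonneg_left ?_ (hX.nonneg m i)
  exact le_min (hAr.sum_le i S) (hAd.sum_le_of_memCr hΔ hAr i S)

/-- For `X ∈ 𝒳` and `A ∈ C_r ∩ C_d`, every subset-selection
constraint of `𝒫₃` holds for `P = XA`: for each phase `m` and nonempty
`S ⊆ {1,…,T}`, `∑_{j∈S} (XA)_{m,j} ≤ ∑_i X_{m,i} · min(r_max·∑_{j∈S} E_{i,j}, e_i/Δ_T)`. -/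
theorem stmt10 (N T : ℕ) (hN : 0 < N) (hT : 0 < T)
    (r_max Δ : ℝ) (hr : 0 < r_max) (hΔ : 0 < Δ)
    (E : Matrix (Fin N) (Fin T) ℝ) (hE : ∀ i j, E i j = 0 ∨ E i j = 1)
    (e : Fin N → ℝ) (he : ∀ i, 0 ≤ e i)
    (X : Matrix (Fin 3) (Fin N) ℝ) (hX : memX X)
    (A : Matrix (Fin N) (Fin T) ℝ) (hAr : memCr r_max E A) (hAd : memCd Δ e A) :
    ∀ (m : Fin 3) (S : Finset (Fin T)), S.Nonempty →
      (∑ j ∈ S, (X * A) m j)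
        ≤ ∑ i, X m i * min (r_max * ∑ j ∈ S, E i j) (e i / Δ) :=
  stmt10_general N T r_max Δ hΔ E e X hX A hAr hAd
end

section
/- Assume the zero-laxity condition r_max·Δ_T·Σ_{j=1}^T E_{i,j} = e_i for every i, and assume problem (P1) satisfies full demand, i.e., there exists a feasible (X, A) ∈ S with f(A) = −Σ_{i=1}^N e_i/Δ_T (equivalently p₁*·Δ_T = −Σ_i e_i). Then the continuous relaxation of problem (P2) with M = I_T and W = r_max·E — minimizing g(P) over fractional X' ∈ [0,1]^{3×N} with unit column sums and P ∈ ℝ^{3×T} with 0 ≤ P ≤ r_max·(X'E) and |(Φ₁P)_{i,j}| ≤ C_max(i,j), |(Φ₂P)_{i,j}| ≤ C_max(i+3,j) — has optimal value exactly p₁* = −Σ_i e_i/Δ_T, and this optimum is attained at an integral point: the pair (X, XA) with X ∈ 𝒳. -/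
open Matrix Complex

/-- Feasibility in the continuous relaxation of (P2) (with `M = I_T`, `W = r_max·E`):
the binary `X ∈ 𝒳` is replaced by a fractional `X' ∈ [0,1]^{3×N}` with unit column
sums. -/
def feasibleP2frac {N T : ℕ} (r_max n_r : ℝ) (E : Matrix (Fin N) (Fin T) ℝ)
    (Cmax : Matrix (Fin 6) (Fin T) ℝ)
    (X' : Matrix (Fin 3) (Fin N) ℝ) (P : Matrix (Fin 3) (Fin T) ℝ) : Prop :=
  (∀ m i, 0 ≤ X' m i ∧ X' m i ≤ 1) ∧ (∀ i, (∑ m, X' m i) = 1) ∧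
  (∀ m j, 0 ≤ P m j) ∧ (∀ m j, P m j ≤ r_max * (X' * E) m j) ∧
  ∀ (i : Fin 3) (j : Fin T),
    ‖(Phi1 * P.map ((↑) : ℝ → ℂ)) i j‖ ≤ Cmax (Fin.castAdd 3 i) j ∧
    ‖(Phi2 n_r * P.map ((↑) : ℝ → ℂ)) i j‖ ≤ Cmax (Fin.addNat i 3) j

/-! Every column of `X` sums to `1`, so `X` only redistributes the vehicles' charging over the
three phases and `g(XA) = f(A)`. Feasibility of `(X, A)` in (P1) carries over to `(X, XA)` in the
relaxation, and both problems are bounded below by `-∑ e_i/Δ`: (P1) through the demand constraint,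
the relaxation because zero laxity makes `r_max · ∑_j (X'E)` equal to `∑ e_i/Δ` for every fractional
`X'`. The full-demand point therefore attains both infima. -/

theorem Matrix.sum_sum_mul_of_col_sum_eq_one {l m n α : Type*} [Fintype l] [Fintype m]
    [Fintype n] [NonAssocSemiring α] {X : Matrix l m α} (hX : ∀ i, ∑ k, X k i = 1)
    (B : Matrix m n α) : ∑ k, ∑ j, (X * B) k j = ∑ i, ∑ j, B i j := by
  simp only [Matrix.mul_apply]
  calc ∑ k, ∑ j, ∑ i, X k i * B i j
      = ∑ j, ∑ i, ∑ k, X k i * B i j := by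
        rw [Finset.sum_comm]
        exact Finset.sum_congr rfl fun j _ => Finset.sum_comm
    _ = ∑ j, ∑ i, B i j := by simp only [← Finset.sum_mul, hX, one_mul]
    _ = ∑ i, ∑ j, B i j := Finset.sum_comm

section

variable {N T : ℕ}

theorem memX.mem_Icc {X : Matrix (Fin 3) (Fin N) ℝ} (hX : memX X) (m : Fin 3) (i : Fin N) :
    0 ≤ X m i ∧ X m i ≤ 1 := by
  rcases hX.1 m i with h | h <;> simp [h]

theorem objG_mul_eq_objF {X : Matrix (Fin 3) (Fin N) ℝ} (hX : ∀ i, ∑ m, X m i = 1)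
    (A : Matrix (Fin N) (Fin T) ℝ) : objG (X * A) = objF A := by
  rw [objG, objF, Matrix.sum_sum_mul_of_col_sum_eq_one hX]

theorem feasibleP1.feasibleP2frac_mul {r_max Δ n_r : ℝ} {E : Matrix (Fin N) (Fin T) ℝ}
    {e : Fin N → ℝ} {Cmax : Matrix (Fin 6) (Fin T) ℝ} {X : Matrix (Fin 3) (Fin N) ℝ}
    {A : Matrix (Fin N) (Fin T) ℝ} (h : feasibleP1 r_max Δ n_r E e Cmax X A) :
    feasibleP2frac r_max n_r E Cmax X (X * A) := by
  obtain ⟨hX, hCr, -, hsoc⟩ := h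
  refine ⟨hX.mem_Icc, hX.2, fun m j => ?_, fun m j => ?_, hsoc⟩
  · rw [Matrix.mul_apply]
    exact Finset.sum_nonneg fun i _ => mul_nonneg (hX.mem_Icc m i).1 (hCr i j).1
  · rw [Matrix.mul_apply, Matrix.mul_apply, Finset.mul_sum]
    refine Finset.sum_le_sum fun i _ => ?_
    calc X m i * A i j ≤ X m i * (r_max * E i j) :=
          mul_le_mul_of_nonneg_left (hCr i j).2 (hX.mem_Icc m i).1
      _ = r_max * (X m i * E i j) := by ring

theorem neg_sum_div_le_objF {r_max Δ n_r : ℝ} {E : Matrix (Fin N) (Fin T) ℝ}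
    {e : Fin N → ℝ} {Cmax : Matrix (Fin 6) (Fin T) ℝ} {X : Matrix (Fin 3) (Fin N) ℝ}
    {A : Matrix (Fin N) (Fin T) ℝ} (hΔ : 0 < Δ) (h : feasibleP1 r_max Δ n_r E e Cmax X A) :
    -(∑ i, e i / Δ) ≤ objF A := by
  have hdemand : ∑ i, ∑ j, A i j ≤ ∑ i, e i / Δ :=
    Finset.sum_le_sum fun i _ => (le_div_iff₀' hΔ).2 (h.2.2.1 i)
  rw [objF]
  linarith

theorem neg_sum_div_le_objG {r_max Δ n_r : ℝ} {E : Matrix (Fin N) (Fin T) ℝ}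
    {e : Fin N → ℝ} {Cmax : Matrix (Fin 6) (Fin T) ℝ} {X' : Matrix (Fin 3) (Fin N) ℝ}
    {P : Matrix (Fin 3) (Fin T) ℝ} (hΔ : Δ ≠ 0) (hzl : ∀ i, r_max * Δ * (∑ j, E i j) = e i)
    (h : feasibleP2frac r_max n_r E Cmax X' P) :
    -(∑ i, e i / Δ) ≤ objG P := by
  obtain ⟨-, hX', -, hPle, -⟩ := h
  have hcap : ∑ m, ∑ j, P m j ≤ ∑ m, ∑ j, r_max * (X' * E) m j :=
    Finset.sum_le_sum fun m _ => Finset.sum_le_sum fun j _ => hPle m j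
  have hzl' : ∑ m, ∑ j, r_max * (X' * E) m j = ∑ i, e i / Δ := by
    simp only [← Finset.mul_sum]
    rw [Matrix.sum_sum_mul_of_col_sum_eq_one hX', Finset.mul_sum]
    refine Finset.sum_congr rfl fun i _ => ?_
    rw [← hzl]
    field_simp
  rw [objG]
  linarith

end

theorem stmt13_general (N T : ℕ)
    (r_max Δ n_r : ℝ) (hΔ : 0 < Δ)
    (E : Matrix (Fin N) (Fin T) ℝ)
    (e : Fin N → ℝ)
    (Cmax : Matrix (Fin 6) (Fin T) ℝ)
    (hzl : ∀ i, r_max * Δ * (∑ j, E i j) = e i)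
    (hfull : ∃ (X : Matrix (Fin 3) (Fin N) ℝ) (A : Matrix (Fin N) (Fin T) ℝ),
      feasibleP1 r_max Δ n_r E e Cmax X A ∧ objF A = -(∑ i, e i / Δ)) :
    sInf {v : ℝ | ∃ (X' : Matrix (Fin 3) (Fin N) ℝ) (P : Matrix (Fin 3) (Fin T) ℝ),
        feasibleP2frac r_max n_r E Cmax X' P ∧ v = objG P}
      = -(∑ i, e i / Δ) ∧
    sInf {v : ℝ | ∃ (X : Matrix (Fin 3) (Fin N) ℝ) (A : Matrix (Fin N) (Fin T) ℝ),
        feasibleP1 r_max Δ n_r E e Cmax X A ∧ v = objF A}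
      = -(∑ i, e i / Δ) ∧
    ∀ (X : Matrix (Fin 3) (Fin N) ℝ) (A : Matrix (Fin N) (Fin T) ℝ),
      feasibleP1 r_max Δ n_r E e Cmax X A → objF A = -(∑ i, e i / Δ) →
        feasibleP2frac r_max n_r E Cmax X (X * A) ∧ objG (X * A) = -(∑ i, e i / Δ) := by
  obtain ⟨X₀, A₀, hfeas₀, hval₀⟩ := hfull
  have hrelax₀ := hfeas₀.feasibleP2frac_mul
  have hg₀ : objG (X₀ * A₀) = -(∑ i, e i / Δ) := (objG_mul_eq_objF hfeas₀.1.2 A₀).trans hval₀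
  refine ⟨IsLeast.csInf_eq ⟨⟨X₀, X₀ * A₀, hrelax₀, hg₀.symm⟩, ?_⟩,
    IsLeast.csInf_eq ⟨⟨X₀, A₀, hfeas₀, hval₀.symm⟩, ?_⟩,
    fun X A hfeas hval => ⟨hfeas.feasibleP2frac_mul, (objG_mul_eq_objF hfeas.1.2 A).trans hval⟩⟩
  · rintro v ⟨X', P, hP, rfl⟩
    exact neg_sum_div_le_objG hΔ.ne' hzl hP
  · rintro v ⟨X, A, hA, rfl⟩
    exact neg_sum_div_le_objF hΔ hA

/-- Under zero laxity, if (P1) satisfies full demand (some feasible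
`(X, A)` has `f(A) = −∑_i e_i/Δ_T`, i.e. `p₁*·Δ_T = −∑_i e_i`), then the continuous
relaxation of (P2) has optimal value exactly `p₁* = −∑_i e_i/Δ_T`, and this optimum is
attained at the integral point `(X, XA)` with `X ∈ 𝒳`. -/
theorem stmt13 (N T : ℕ) (hN : 0 < N) (hT : 0 < T)
    (r_max Δ n_r : ℝ) (hr : 0 < r_max) (hΔ : 0 < Δ) (hn : 0 < n_r)
    (E : Matrix (Fin N) (Fin T) ℝ) (hE : ∀ i j, E i j = 0 ∨ E i j = 1)
    (e : Fin N → ℝ) (he : ∀ i, 0 ≤ e i)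
    (Cmax : Matrix (Fin 6) (Fin T) ℝ) (hC : ∀ i j, 0 ≤ Cmax i j)
    (hzl : ∀ i, r_max * Δ * (∑ j, E i j) = e i)
    (hfull : ∃ (X : Matrix (Fin 3) (Fin N) ℝ) (A : Matrix (Fin N) (Fin T) ℝ),
      feasibleP1 r_max Δ n_r E e Cmax X A ∧ objF A = -(∑ i, e i / Δ)) :
    sInf {v : ℝ | ∃ (X' : Matrix (Fin 3) (Fin N) ℝ) (P : Matrix (Fin 3) (Fin T) ℝ),
        feasibleP2frac r_max n_r E Cmax X' P ∧ v = objG P}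
      = -(∑ i, e i / Δ) ∧
    sInf {v : ℝ | ∃ (X : Matrix (Fin 3) (Fin N) ℝ) (A : Matrix (Fin N) (Fin T) ℝ),
        feasibleP1 r_max Δ n_r E e Cmax X A ∧ v = objF A}
      = -(∑ i, e i / Δ) ∧
    ∀ (X : Matrix (Fin 3) (Fin N) ℝ) (A : Matrix (Fin N) (Fin T) ℝ),
      feasibleP1 r_max Δ n_r E e Cmax X A → objF A = -(∑ i, e i / Δ) →
        feasibleP2frac r_max n_r E Cmax X (X * A) ∧ objG (X * A) = -(∑ i, e i / Δ) :=
  stmt13_general N T r_max Δ n_r hΔ E e Cmax hzl hfull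
end
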